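/- (Corollary 19 of the paper) If P ⊆ 2^ω is a set of infinite binary strings such that both P and its complement 2^ω \ P are dense in the Cantor space, then there is no propositional L_{ω1ω}-formula φ with s(φ) < ω² such that for every t ∈ 2^ω, t satisfies φ if and only if t ∈ P. -/

import Mathlib

/-- Propositional `L_{ω₁ω}`-formulas over propositional symbols `p i`, `i : ℕ`,
in negation normal form. -/
inductive PFml : Type
  | pos : ℕ → PFml
  | neg : ℕ → PFml
  | and : PFml → PFml → PFml
  | or : PFml → PFml → PFml
  | iand : (ℕ → PFml) → PFml
  | ior : (ℕ → PFml) → PFml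

/-- Satisfaction of a propositional formula by an infinite binary string. -/
def PSat (t : ℕ → Bool) : PFml → Prop
  | .pos i => t i = true
  | .neg i => t i = false
  | .and φ ψ => PSat t φ ∧ PSat t ψ
  | .or φ ψ => PSat t φ ∨ PSat t ψ
  | .iand f => ∀ i : ℕ, PSat t (f i)
  | .ior f => ∃ i : ℕ, PSat t (f i)

namespace Ordinal

universe u

/-- Natural (Hessenberg) addition of ordinals, as defined in the older Mathlib
(removed from the current one). -/
noncomputable def nadd (a b : Ordinal.{u}) : Ordinal.{u} :=
  max (⨆ x : Set.Iio a, Order.succ (nadd x.1 b)) (⨆ x : Set.Iio b, Order.succ (nadd a x.1))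
termination_by (a, b)
decreasing_by
  all_goals rcases x with ⟨x, hx⟩
  · exact Prod.Lex.left _ _ hx
  · exact Prod.Lex.right _ hx

end Ordinal

/-- Finite partial natural (Hessenberg) sums. -/
noncomputable def natSumPrefix (γ : ℕ → Ordinal) : ℕ → Ordinal
  | 0 => 0
  | n + 1 => Ordinal.nadd (natSumPrefix γ n) (γ n)

/-- The infinite natural sum. -/
noncomputable def inatSum (γ : ℕ → Ordinal) : Ordinal := ⨆ n : ℕ, natSumPrefix γ n


noncomputable def psize : PFml → Ordinal
  | .pos _ => 1
  | .neg _ => 1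
  | .and φ ψ => Ordinal.nadd (psize φ) (psize ψ)
  | .or φ ψ => Ordinal.nadd (psize φ) (psize ψ)
  | .iand f => inatSum fun i => psize (f i)
  | .ior f => inatSum fun i => psize (f i)

/-!
A formula of finite size involves only finitely many literals, so it defines a clopen set. The
frontier of the set defined by a formula of size `< ω²` is nowhere dense: conjunctions and
disjunctions preserve this, and in a countable conjunction (disjunction) of size `< ω²` all but
finitely many conjuncts (disjuncts) have finite size, so the formula is the intersection (union) of
finitely many sets with nowhere dense frontier and of one closed (open) set. A dense set with dense
complement has frontier the whole space.
-/

open Set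

section FrontierNowhereDense

variable {X ι : Type*} [TopologicalSpace X]

theorem IsNowhereDense.union {s t : Set X} (hs : IsNowhereDense s) (ht : IsNowhereDense t) :
    IsNowhereDense (s ∪ t) := by
  rw [IsNowhereDense, closure_union,
    interior_union_isClosed_of_interior_empty isClosed_closure ht]
  exact hs

theorem isNowhereDense_frontier_of_isClosed {s : Set X} (hs : IsClosed s) :
    IsNowhereDense (frontier s) :=
  isClosed_frontier.isNowhereDense_iff.2 (interior_frontier hs)

theorem isNowhereDense_frontier_of_isOpen {s : Set X} (hs : IsOpen s) :
    IsNowhereDense (frontier s) :=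
  frontier_compl s ▸ isNowhereDense_frontier_of_isClosed hs.isClosed_compl

theorem isNowhereDense_frontier_union {s t : Set X} (hs : IsNowhereDense (frontier s))
    (ht : IsNowhereDense (frontier t)) : IsNowhereDense (frontier (s ∪ t)) :=
  (hs.union ht).mono <| (frontier_union_subset s t).trans <|
    union_subset_union inter_subset_left inter_subset_right

theorem isNowhereDense_frontier_inter {s t : Set X} (hs : IsNowhereDense (frontier s))
    (ht : IsNowhereDense (frontier t)) : IsNowhereDense (frontier (s ∩ t)) := by
  rw [← frontier_compl, compl_inter]
  exact isNowhereDense_frontier_union ((frontier_compl s).symm ▸ hs) ((frontier_compl t).symm ▸ ht)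

theorem Set.Finite.isNowhereDense_frontier_biUnion {F : Set ι} (hF : F.Finite) {s : ι → Set X}
    (hs : ∀ i, IsNowhereDense (frontier (s i))) : IsNowhereDense (frontier (⋃ i ∈ F, s i)) := by
  induction F, hF using Set.Finite.induction_on with
  | empty => simp
  | @insert i F _ _ ih =>
    rw [biUnion_insert]
    exact isNowhereDense_frontier_union (hs i) ih

theorem isNowhereDense_frontier_iUnion {s : ι → Set X} (hfin : {i | ¬IsOpen (s i)}.Finite)
    (hs : ∀ i, IsNowhereDense (frontier (s i))) : IsNowhereDense (frontier (⋃ i, s i)) := by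
  rw [← biUnion_univ, ← union_compl_self {i | ¬IsOpen (s i)}, biUnion_union]
  refine isNowhereDense_frontier_union (hfin.isNowhereDense_frontier_biUnion hs)
    (isNowhereDense_frontier_of_isOpen (isOpen_biUnion fun i hi => ?_))
  simpa using hi

theorem isNowhereDense_frontier_iInter {s : ι → Set X} (hfin : {i | ¬IsClosed (s i)}.Finite)
    (hs : ∀ i, IsNowhereDense (frontier (s i))) : IsNowhereDense (frontier (⋂ i, s i)) := by
  rw [← frontier_compl, compl_iInter]
  refine isNowhereDense_frontier_iUnion ?_ fun i => (frontier_compl (s i)).symm ▸ hs i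
  simpa only [isOpen_compl_iff] using hfin

theorem Dense.not_isNowhereDense_frontier [Nonempty X] {s : Set X} (hs : Dense s)
    (hsc : Dense sᶜ) : ¬IsNowhereDense (frontier s) := by
  rw [IsNowhereDense, frontier, hs.closure_eq, interior_eq_empty_iff_dense_compl.2 hsc,
    sdiff_empty, closure_univ, interior_univ]
  exact univ_nonempty.ne_empty

end FrontierNowhereDense

namespace Ordinal

theorem nadd_lt_nadd_left {a b : Ordinal} (h : a < b) (c : Ordinal) : nadd c a < nadd c b := by
  conv_rhs => rw [nadd]
  calc nadd c a < Order.succ (nadd c a) := Order.lt_succ _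
    _ ≤ ⨆ x : Iio b, Order.succ (nadd c x.1) :=
      Ordinal.le_iSup (fun x : Iio b => Order.succ (nadd c x.1)) ⟨a, h⟩
    _ ≤ _ := le_max_right _ _

theorem nadd_lt_nadd_right {a b : Ordinal} (h : a < b) (c : Ordinal) : nadd a c < nadd b c := by
  conv_rhs => rw [nadd]
  calc nadd a c < Order.succ (nadd a c) := Order.lt_succ _
    _ ≤ ⨆ x : Iio b, Order.succ (nadd x.1 c) :=
      Ordinal.le_iSup (fun x : Iio b => Order.succ (nadd x.1 c)) ⟨a, h⟩
    _ ≤ _ := le_max_left _ _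

theorem le_self_nadd (a b : Ordinal) : a ≤ nadd a b :=
  StrictMono.le_apply (f := fun x => nadd x b) fun _ _ h => nadd_lt_nadd_right h b

theorem le_nadd_self (a b : Ordinal) : b ≤ nadd a b :=
  StrictMono.le_apply (f := nadd a) fun _ _ h => nadd_lt_nadd_left h a

theorem add_le_nadd (a b : Ordinal) : a + b ≤ nadd a b := by
  induction b using WellFoundedLT.induction with
  | _ b ih =>
    rcases eq_or_ne b 0 with rfl | hb
    · simpa using le_self_nadd a 0
    · refine le_of_forall_lt fun x hx => ?_
      obtain ⟨d, hd, hxd⟩ := (lt_add_iff hb).1 hx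
      exact (hxd.trans (ih d hd)).trans_lt (nadd_lt_nadd_left hd a)

end Ordinal

open Ordinal

theorem natSumPrefix_mono (γ : ℕ → Ordinal) : Monotone (natSumPrefix γ) :=
  monotone_nat_of_le_succ fun n => le_self_nadd (natSumPrefix γ n) (γ n)

theorem natSumPrefix_le_inatSum (γ : ℕ → Ordinal) (n : ℕ) : natSumPrefix γ n ≤ inatSum γ :=
  Ordinal.le_iSup (natSumPrefix γ) n

theorem le_inatSum (γ : ℕ → Ordinal) (i : ℕ) : γ i ≤ inatSum γ :=
  (le_nadd_self _ _).trans (natSumPrefix_le_inatSum γ (i + 1))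

theorem omega0_le_inatSum {γ : ℕ → Ordinal} (h : ∀ i, 1 ≤ γ i) : ω ≤ inatSum γ := by
  have nat_le_natSumPrefix : ∀ n : ℕ, (n : Ordinal) ≤ natSumPrefix γ n := by
    intro n
    induction n with
    | zero => simp
    | succ n ih =>
      push_cast
      exact (add_le_add ih (h n)).trans (add_le_nadd _ _)
  exact omega0_le.2 fun n => (nat_le_natSumPrefix n).trans (natSumPrefix_le_inatSum γ n)

theorem finite_setOf_omega0_le_of_inatSum_lt {γ : ℕ → Ordinal} (h : inatSum γ < ω * ω) :
    {i | ω ≤ γ i}.Finite := by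
  refine not_infinite.1 fun hinf => h.not_ge ?_
  have omega0_mul_le_natSumPrefix : ∀ k : ℕ, ∃ n, ω * k ≤ natSumPrefix γ n := by
    intro k
    induction k with
    | zero => exact ⟨0, by simp⟩
    | succ k ih =>
      obtain ⟨n, hn⟩ := ih
      obtain ⟨i, hi, hni⟩ := hinf.exists_gt n
      refine ⟨i + 1, ?_⟩
      calc ω * ↑(k + 1) = ω * k + ω := by push_cast; rw [mul_add_one]
        _ ≤ natSumPrefix γ i + γ i := add_le_add (hn.trans (natSumPrefix_mono γ hni.le)) hi
        _ ≤ natSumPrefix γ (i + 1) := add_le_nadd _ _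
  rw [mul_le_iff_of_isSuccLimit isSuccLimit_omega0]
  intro b hb
  obtain ⟨k, rfl⟩ := lt_omega0.1 hb
  obtain ⟨n, hn⟩ := omega0_mul_le_natSumPrefix k
  exact hn.trans (natSumPrefix_le_inatSum γ n)

theorem one_le_psize (φ : PFml) : 1 ≤ psize φ := by
  induction φ with
  | pos | neg => exact le_rfl
  | and φ ψ ih _ | or φ ψ ih _ => exact ih.trans (le_self_nadd _ _)
  | iand f ih | ior f ih => exact (ih 0).trans (le_inatSum _ 0)

theorem isClopen_setOf_pSat {φ : PFml} (h : psize φ < ω) : IsClopen {t | PSat t φ} := by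
  induction φ with
  | pos i => exact (isClopen_discrete {true}).preimage (continuous_apply i)
  | neg i => exact (isClopen_discrete {false}).preimage (continuous_apply i)
  | and φ ψ ihφ ihψ =>
    exact (ihφ ((le_self_nadd _ _).trans_lt h)).inter (ihψ ((le_nadd_self _ _).trans_lt h))
  | or φ ψ ihφ ihψ =>
    exact (ihφ ((le_self_nadd _ _).trans_lt h)).union (ihψ ((le_nadd_self _ _).trans_lt h))
  | iand f _ | ior f _ => exact absurd (omega0_le_inatSum fun i => one_le_psize (f i)) h.not_ge

theorem isNowhereDense_frontier_setOf_pSat {φ : PFml} (h : psize φ < ω * ω) :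
    IsNowhereDense (frontier {t | PSat t φ}) := by
  induction φ with
  | pos i =>
    exact isNowhereDense_frontier_of_isOpen
      ((isClopen_discrete {true}).preimage (continuous_apply i)).isOpen
  | neg i =>
    exact isNowhereDense_frontier_of_isOpen
      ((isClopen_discrete {false}).preimage (continuous_apply i)).isOpen
  | and φ ψ ihφ ihψ =>
    exact isNowhereDense_frontier_inter (ihφ ((le_self_nadd _ _).trans_lt h))
      (ihψ ((le_nadd_self _ _).trans_lt h))
  | or φ ψ ihφ ihψ =>
    exact isNowhereDense_frontier_union (ihφ ((le_self_nadd _ _).trans_lt h))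
      (ihψ ((le_nadd_self _ _).trans_lt h))
  | iand f ih =>
    simp only [PSat, ofPred_forall]
    refine isNowhereDense_frontier_iInter
      ((finite_setOf_omega0_le_of_inatSum_lt h).subset fun i hi => ?_)
      fun i => ih i ((le_inatSum _ i).trans_lt h)
    exact not_lt.1 fun hlt => hi (isClopen_setOf_pSat hlt).isClosed
  | ior f ih =>
    simp only [PSat, ofPred_exists]
    refine isNowhereDense_frontier_iUnion
      ((finite_setOf_omega0_le_of_inatSum_lt h).subset fun i hi => ?_)
      fun i => ih i ((le_inatSum _ i).trans_lt h)
    exact not_lt.1 fun hlt => hi (isClopen_setOf_pSat hlt).isOpen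

/-- A set of strings which is dense with dense complement is not definable by a
propositional `L_{ω₁ω}`-formula of size less than `ω²`. -/
theorem not_definable_of_dense_compl_dense (P : Set (ℕ → Bool))
    (hP : Dense P) (hPc : Dense Pᶜ) :
    ¬ ∃ φ : PFml, psize φ < Ordinal.omega0 * Ordinal.omega0 ∧
      ∀ t : ℕ → Bool, PSat t φ ↔ t ∈ P := by
  rintro ⟨φ, hsize, hdef⟩
  have hφP : {t | PSat t φ} = P := Set.ext hdef
  exact hP.not_isNowhereDense_frontier hPc (hφP ▸ isNowhereDense_frontier_setOf_pSat hsize)
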